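/- For every real p > 1, the integral ∫₀^{π/2} dσ/(1 + cos²σ · F_p(σ)) equals (π/2)(1 − √((p−1)/(2p))), where F_p(σ) = ((8p−4) cos²σ + (5p−7) sin²σ)/(4 cos²σ + (p−1) sin²σ). -/

import Mathlib

/-!
In `t = tan σ` the integrand is `2/(t² + 4) - (p - 1)/((p - 1) t² + 2p)`; back in `σ` this splits
it as `2/(4 cos² σ + sin² σ) - (p - 1)/(2p cos² σ + (p - 1) sin² σ)`. Each piece has the form
`1/(a² cos² + b² sin²)`, whose integral over `[0, π/2]` is `π/(2ab)`.
-/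

open Real

noncomputable def Fp (p σ : ℝ) : ℝ :=
  ((8 * p - 4) * cos σ ^ 2 + (5 * p - 7) * sin σ ^ 2) /
    (4 * cos σ ^ 2 + (p - 1) * sin σ ^ 2)

lemma mul_cos_sq_add_mul_sin_sq_pos {α β : ℝ} (hα : 0 < α) (hβ : 0 < β) (x : ℝ) :
    0 < α * cos x ^ 2 + β * sin x ^ 2 := by
  rcases le_total α β with h | h <;>
    nlinarith [sin_sq_add_cos_sq x, sq_nonneg (cos x), sq_nonneg (sin x)]

lemma continuous_div_mul_cos_sq_add_mul_sin_sq (c : ℝ) {α β : ℝ} (hα : 0 < α) (hβ : 0 < β) :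
    Continuous fun x => c / (α * cos x ^ 2 + β * sin x ^ 2) :=
  continuous_const.div (by fun_prop) fun x => (mul_cos_sq_add_mul_sin_sq_pos hα hβ x).ne'

/- On `(-π/2, π/2)` this antiderivative equals `arctan ((b / a) tan x)`; written this way it is
smooth across `π/2`, where `tan` is not. -/
lemma hasDerivAt_add_arctan_div {a b : ℝ} (ha : 0 < a) (hb : 0 < b) (x : ℝ) :
    HasDerivAt
      (fun y => y + arctan ((b - a) * (sin y * cos y) / (a * cos y ^ 2 + b * sin y ^ 2)))
      (a * b / (a ^ 2 * cos x ^ 2 + b ^ 2 * sin x ^ 2)) x := by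
  have hD := (mul_cos_sq_add_mul_sin_sq_pos ha hb x).ne'
  have hE := (mul_cos_sq_add_mul_sin_sq_pos (pow_pos ha 2) (pow_pos hb 2) x).ne'
  have hsc : HasDerivAt (fun y => (b - a) * (sin y * cos y))
      ((b - a) * (cos x * cos x + sin x * -sin x)) x :=
    ((hasDerivAt_sin x).mul (hasDerivAt_cos x)).const_mul _
  have hden := (((hasDerivAt_cos x).fun_pow 2).const_mul a).add
    (((hasDerivAt_sin x).fun_pow 2).const_mul b)
  refine ((hasDerivAt_id x).add ((hsc.div hden hD).arctan)).congr_deriv ?_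
  have hpyth := sin_sq_add_cos_sq x
  have hden_sq : (a * cos x ^ 2 + b * sin x ^ 2) ^ 2 *
      (1 + ((b - a) * (sin x * cos x) / (a * cos x ^ 2 + b * sin x ^ 2)) ^ 2)
      = a ^ 2 * cos x ^ 2 + b ^ 2 * sin x ^ 2 := by
    field_simp
    linear_combination (a ^ 2 * cos x ^ 2 + b ^ 2 * sin x ^ 2) * hpyth
  simp only [Pi.div_apply, Pi.add_apply]
  rw [one_div_mul_eq_div, div_div, hden_sq]
  field_simp
  linear_combination (a * b * (sin x ^ 2 + cos x ^ 2 + 1) - (a ^ 2 * cos x ^ 2 + b ^ 2 * sin x ^ 2)) * hpyth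

theorem integral_one_div_sq_mul_cos_sq_add_sq_mul_sin_sq {a b : ℝ} (ha : 0 < a) (hb : 0 < b) :
    ∫ x in (0 : ℝ)..(π / 2), 1 / (a ^ 2 * cos x ^ 2 + b ^ 2 * sin x ^ 2) = π / (2 * a * b) := by
  have hcont := continuous_div_mul_cos_sq_add_mul_sin_sq (a * b) (pow_pos ha 2) (pow_pos hb 2)
  have h := intervalIntegral.integral_eq_sub_of_hasDerivAt
    (fun x _ => hasDerivAt_add_arctan_div ha hb x) (hcont.intervalIntegrable 0 (π / 2))
  simp only [sin_zero, cos_zero, sin_pi_div_two, cos_pi_div_two, mul_zero, zero_mul, zero_div,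
    arctan_zero, add_zero, sub_zero] at h
  simp_rw [← mul_one_div (a * b), intervalIntegral.integral_const_mul] at h
  field_simp
  linear_combination 2 * h

lemma one_div_one_add_cos_sq_mul_Fp {p : ℝ} (hp : 1 < p) (σ : ℝ) :
    1 / (1 + cos σ ^ 2 * Fp p σ) =
      2 / (4 * cos σ ^ 2 + sin σ ^ 2) - (p - 1) / (2 * p * cos σ ^ 2 + (p - 1) * sin σ ^ 2) := by
  have h₁ := mul_cos_sq_add_mul_sin_sq_pos (by norm_num : (0 : ℝ) < 4) (sub_pos.2 hp) σ
  have h₂ := mul_cos_sq_add_mul_sin_sq_pos (by norm_num : (0 : ℝ) < 4) one_pos σ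
  have h₃ := mul_cos_sq_add_mul_sin_sq_pos (by linarith : 0 < 2 * p) (sub_pos.2 hp) σ
  rw [one_mul] at h₂
  have hden : 1 + cos σ ^ 2 * Fp p σ = (4 * cos σ ^ 2 + sin σ ^ 2) *
      (2 * p * cos σ ^ 2 + (p - 1) * sin σ ^ 2) / (4 * cos σ ^ 2 + (p - 1) * sin σ ^ 2) := by
    rw [Fp, eq_div_iff h₁.ne', add_mul, one_mul, mul_assoc, div_mul_cancel₀ _ h₁.ne', sin_sq]
    ring
  rw [hden, one_div_div, div_sub_div _ _ h₂.ne' h₃.ne', div_eq_div_iff (by positivity) (by positivity),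
    sin_sq]
  ring

theorem stmt_6 (p : ℝ) (hp : 1 < p) :
    ∫ σ in (0 : ℝ)..(π / 2), 1 / (1 + cos σ ^ 2 * Fp p σ) =
      π / 2 * (1 - Real.sqrt ((p - 1) / (2 * p))) := by
  have hp₀ : 0 < p := by linarith
  have h₁ : ∫ σ in (0 : ℝ)..(π / 2), 1 / (4 * cos σ ^ 2 + sin σ ^ 2) = π / 4 := by
    have := integral_one_div_sq_mul_cos_sq_add_sq_mul_sin_sq two_pos one_pos
    norm_num at this
    simpa [one_div] using this
  have h₂ : ∫ σ in (0 : ℝ)..(π / 2), 1 / (2 * p * cos σ ^ 2 + (p - 1) * sin σ ^ 2) =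
      π / (2 * √(2 * p) * √(p - 1)) := by
    have := integral_one_div_sq_mul_cos_sq_add_sq_mul_sin_sq (sqrt_pos.2 (by positivity : 0 < 2 * p))
      (sqrt_pos.2 (sub_pos.2 hp))
    rwa [sq_sqrt (by positivity), sq_sqrt (sub_pos.2 hp).le] at this
  have hi₁ := continuous_div_mul_cos_sq_add_mul_sin_sq 1 four_pos one_pos
  have hi₂ := continuous_div_mul_cos_sq_add_mul_sin_sq 1 (by positivity : 0 < 2 * p) (sub_pos.2 hp)
  simp only [one_mul] at hi₁
  calc ∫ σ in (0 : ℝ)..(π / 2), 1 / (1 + cos σ ^ 2 * Fp p σ)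
      = ∫ σ in (0 : ℝ)..(π / 2), (2 * (1 / (4 * cos σ ^ 2 + sin σ ^ 2)) -
          (p - 1) * (1 / (2 * p * cos σ ^ 2 + (p - 1) * sin σ ^ 2))) := by
        simp_rw [one_div_one_add_cos_sq_mul_Fp hp, mul_one_div]
    _ = 2 * (π / 4) - (p - 1) * (π / (2 * √(2 * p) * √(p - 1))) := by
        rw [intervalIntegral.integral_sub ((hi₁.intervalIntegrable _ _).const_mul 2)
          ((hi₂.intervalIntegrable _ _).const_mul (p - 1)),
          intervalIntegral.integral_const_mul,
          intervalIntegral.integral_const_mul, h₁, h₂]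
    _ = π / 2 * (1 - √((p - 1) / (2 * p))) := by
        have hs := sq_sqrt (sub_pos.2 hp).le
        have h2p := sqrt_pos.2 (by positivity : 0 < 2 * p)
        have hp1 := sqrt_pos.2 (sub_pos.2 hp)
        rw [sqrt_div (sub_pos.2 hp).le]
        field_simp
        linear_combination 4 * hs
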